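/- arXiv:1708.07466 — 7 statements merged into one kernel-verified Lean document; each statement's English description precedes it below -/
import Mathlib

section
/- Let U = (U_1,...,U_d) be independent random variables and f measurable with f(U) square-integrable. For 1 ≤ i ≤ d, if f_i : F^i → ℝ is measurable and f_i(U_1,...,U_i) is square-integrable, then C(i) ≤ Var(f(U) - f_i(U_1,...,U_i)), where C(i) = Var(E[f(U) | U_{i+1},...,U_d]). -/
open MeasureTheory ProbabilityTheory

/-!
Let `G` be the σ-algebra generated by `U_{i+1}, …, U_d`. Since `f_i(U_1, …, U_i)` is independent
of `G`, its conditional expectation given `G` is the constant `E[f_i(U_1, …, U_i)]`, so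
`E[f(U) | G]` and `E[f(U) - f_i(U_1, …, U_i) | G]` differ by a constant and have the same variance.
By the law of total variance, conditioning does not increase the variance of a square-integrable
variable.
-/

lemma measurable_pi_iSup_comap {Ω ι : Type*} {β : ι → Type*} [mβ : ∀ i, MeasurableSpace (β i)]
    (U : ∀ i, Ω → β i) : Measurable[⨆ i, (mβ i).comap (U i)] fun ω i => U i ω := by
  rw [measurable_iff_comap_le, MeasurableSpace.pi, MeasurableSpace.comap_iSup]
  simp_rw [MeasurableSpace.comap_comp]
  rfl

namespace ProbabilityTheory

section Variance

variable {Ω : Type*} {m₀ m m' : MeasurableSpace Ω} {μ : Measure[m₀] Ω} [IsProbabilityMeasure μ]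
  {X Y : Ω → ℝ}

lemma variance_condExp_le (hm : m ≤ m₀) (hX : MemLp X 2 μ) : Var[μ[X | m]; μ] ≤ Var[X; μ] := by
  rw [← integral_condVar_add_variance_condExp hm hX, le_add_iff_nonneg_left]
  exact integral_nonneg_of_ae (condExp_nonneg (.of_forall fun ω => sq_nonneg _))

lemma variance_condExp_sub_of_indep (hm : m ≤ m₀) (hm' : m' ≤ m₀)
    (hYm' : StronglyMeasurable[m'] Y) (hind : Indep m' m μ)
    (hX : Integrable X μ) (hY : Integrable Y μ) :
    Var[μ[X - Y | m]; μ] = Var[μ[X | m]; μ] := by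
  have hYconst : μ[Y | m] =ᵐ[μ] fun _ => μ[Y] := condExp_indep_eq hm' hm hYm' hind
  calc Var[μ[X - Y | m]; μ]
      = Var[fun ω => μ[X | m] ω - μ[Y]; μ] := by
        refine variance_congr ?_
        filter_upwards [condExp_sub hX hY m, hYconst] with ω hsub hconst
        rw [hsub, Pi.sub_apply, hconst]
    _ = Var[μ[X | m]; μ] :=
        variance_sub_const (stronglyMeasurable_condExp.mono hm).aestronglyMeasurable _

lemma variance_condExp_le_variance_sub_of_indep (hm : m ≤ m₀) (hm' : m' ≤ m₀)
    (hYm' : StronglyMeasurable[m'] Y) (hind : Indep m' m μ)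
    (hX : MemLp X 2 μ) (hY : MemLp Y 2 μ) :
    Var[μ[X | m]; μ] ≤ Var[X - Y; μ] := by
  rw [← variance_condExp_sub_of_indep hm hm' hYm' hind (hX.integrable one_le_two)
    (hY.integrable one_le_two)]
  exact variance_condExp_le hm (hX.sub hY)

end Variance

lemma iIndepFun.indep_iSup_comap_of_disjoint {Ω ι : Type*} {m₀ : MeasurableSpace Ω}
    {μ : Measure[m₀] Ω} {β : ι → Type*} {mβ : ∀ i, MeasurableSpace (β i)}
    {U : ∀ i, Ω → β i} (hU : iIndepFun U μ) (hUmeas : ∀ i, Measurable (U i))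
    {p q : ι → Prop} (hpq : ∀ i, p i → ¬q i) :
    Indep (⨆ i : {i // p i}, (mβ i).comap (U i)) (⨆ i : {i // q i}, (mβ i).comap (U i)) μ := by
  rw [iSup_subtype, iSup_subtype]
  exact indep_iSup_of_disjoint (fun i => (hUmeas i).comap_le) hU.iIndep
    (S := {i | p i}) (T := {i | q i}) (Set.disjoint_left.mpr hpq)

end ProbabilityTheory

theorem stmt_2_general {Ω F : Type*} [MeasurableSpace Ω] [mF : MeasurableSpace F]
    (μ : Measure Ω) [IsProbabilityMeasure μ]
    (d : ℕ) (U : Fin d → Ω → F)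
    (hUmeas : ∀ j, Measurable (U j))
    (hUindep : iIndepFun (m := fun _ => mF) U μ)
    (f : (Fin d → F) → ℝ)
    (hfL2 : MemLp (fun ω => f (fun j => U j ω)) 2 μ)
    (i : ℕ)
    (fi : ({j : Fin d // (j : ℕ) < i} → F) → ℝ) (hfi : Measurable fi)
    (hfiL2 : MemLp (fun ω => fi (fun j => U j.1 ω)) 2 μ) :
    variance
      (μ[(fun ω => f (fun j => U j ω)) |
        ⨆ j : {j : Fin d // i ≤ (j : ℕ)}, MeasurableSpace.comap (U j) mF]) μ ≤
    variance (fun ω => f (fun j => U j ω) - fi (fun j => U j.1 ω)) μ := by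
  have hpast : ⨆ j : {j : Fin d // (j : ℕ) < i}, MeasurableSpace.comap (U j) mF ≤
      ‹MeasurableSpace Ω› := iSup_le fun j => (hUmeas j).comap_le
  have hfuture : ⨆ j : {j : Fin d // i ≤ (j : ℕ)}, MeasurableSpace.comap (U j) mF ≤
      ‹MeasurableSpace Ω› := iSup_le fun j => (hUmeas j).comap_le
  have hfiU : Measurable[⨆ j : {j : Fin d // (j : ℕ) < i}, MeasurableSpace.comap (U j) mF]
      fun ω => fi (fun j => U j.1 ω) :=
    hfi.comp <| measurable_pi_iSup_comap fun j : {j : Fin d // (j : ℕ) < i} => U j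
  have hind := hUindep.indep_iSup_comap_of_disjoint hUmeas
    (p := fun j : Fin d => (j : ℕ) < i) (q := fun j => i ≤ (j : ℕ)) fun _ hlt hle => hle.not_gt hlt
  exact variance_condExp_le_variance_sub_of_indep hfuture hpast hfiU.stronglyMeasurable hind
    hfL2 hfiL2

/-- `C i ≤ Var(f(U) - f_i(U_1, …, U_i))` for any measurable `f_i` of
the first `i` coordinates with `f_i(U_1, …, U_i)` square-integrable.
Indices are 0-based: `U j` stands for `U_{j+1}`. -/
theorem stmt_2 {Ω F : Type*} [MeasurableSpace Ω] [mF : MeasurableSpace F]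
    (μ : Measure Ω) [IsProbabilityMeasure μ]
    (d : ℕ) (U : Fin d → Ω → F)
    (hUmeas : ∀ j, Measurable (U j))
    (hUindep : iIndepFun (m := fun _ => mF) U μ)
    (f : (Fin d → F) → ℝ) (hf : Measurable f)
    (hfL2 : MemLp (fun ω => f (fun j => U j ω)) 2 μ)
    (i : ℕ) (hi : 1 ≤ i) (hid : i ≤ d)
    (fi : ({j : Fin d // (j : ℕ) < i} → F) → ℝ) (hfi : Measurable fi)
    (hfiL2 : MemLp (fun ω => fi (fun j => U j.1 ω)) 2 μ) :
    variance
      (μ[(fun ω => f (fun j => U j ω)) |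
        ⨆ j : {j : Fin d // i ≤ (j : ℕ)}, MeasurableSpace.comap (U j) mF]) μ ≤
    variance (fun ω => f (fun j => U j ω) - fi (fun j => U j.1 ω)) μ :=
  stmt_2_general (mF := mF) μ d U hUmeas hUindep f hfL2 i fi hfi hfiL2
end

section
/- Let 0 = t_0 < t_1 < ... < t_d and let ν = (ν_0,...,ν_d) with ν_0,...,ν_{d-1} > 0, ν_d = 0, such that the sequence ν_i/t_{i+1} is decreasing in i for 0 ≤ i ≤ d-1. Define q_i = sqrt(t_1 ν_i / (ν_0 t_{i+1})) for 0 ≤ i ≤ d-1. Then R(q) := (Σ_{i=0}^{d-1} q_i (t_{i+1} - t_i)) · (Σ_{i=0}^{d-1} (ν_i - ν_{i+1})/q_i) ≤ 4 (Σ_{i=0}^{d-1} sqrt(ν_i) (sqrt(t_{i+1}) - sqrt(t_i)))^2. -/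
/-!
Write `x i = √(t i)`, `y i = √(ν i)` and `p i = y i / x (i + 1)`. The product `R(q)` is
unchanged when `q` is multiplied by a nonzero constant, and the prescribed `q` is
`√(t 1 / ν 0)` times `p`, so it suffices to bound `R(p) = U * V` with
`U = ∑ p i * (x (i+1)^2 - x i^2)` and `V = ∑ (y i^2 - y (i+1)^2) / p i`.
By AM-GM each summand `w / z * (z^2 - z'^2)` is at most `2 * w * (z - z')`, which gives
`U ≤ 2 S` for `S = ∑ y i * (x (i+1) - x i)` directly, and `V ≤ 2 S` after a summation by
parts that uses `x 0 = 0` and `y d = 0`.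
-/

open Finset

lemma div_mul_sq_sub_sq_le_two_mul_sub {K : Type*} [Field K] [LinearOrder K]
    [IsStrictOrderedRing K] {w z : K} (z' : K) (hw : 0 ≤ w) (hz : 0 < z) :
    w / z * (z ^ 2 - z' ^ 2) ≤ 2 * w * (z - z') := by
  rw [div_mul_eq_mul_div, div_le_iff₀ hz]
  nlinarith [mul_nonneg hw (sq_nonneg (z - z'))]

lemma sum_range_mul_sub_succ_eq {R : Type*} [CommRing R] {d : ℕ} {a b : ℕ → R}
    (ha : a d = 0) (hb : b 0 = 0) :
    ∑ i ∈ range d, b (i + 1) * (a i - a (i + 1)) = ∑ i ∈ range d, a i * (b (i + 1) - b i) := by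
  rw [← sub_eq_zero, ← sum_sub_distrib]
  have hterm : ∀ i, b (i + 1) * (a i - a (i + 1)) - a i * (b (i + 1) - b i) =
      a i * b i - a (i + 1) * b (i + 1) := fun i => by ring
  simp only [hterm, sum_range_sub', ha, hb, mul_zero, zero_mul, sub_self]

lemma sum_mul_mul_sum_div_const_mul {ι K : Type*} [Field K] (s : Finset ι) {c : K}
    (hc : c ≠ 0) (p a b : ι → K) :
    (∑ i ∈ s, c * p i * a i) * (∑ i ∈ s, b i / (c * p i)) =
      (∑ i ∈ s, p i * a i) * (∑ i ∈ s, b i / p i) := by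
  have ha : ∀ i, c * p i * a i = c * (p i * a i) := fun i => by ring
  have hb : ∀ i, b i / (c * p i) = c⁻¹ * (b i / p i) := fun i => by
    rw [mul_comm c, ← div_div, div_eq_inv_mul _ c]
  simp only [ha, hb, ← mul_sum]
  field_simp

lemma nonneg_of_zero_of_lt_succ {α : Type*} [Preorder α] [Zero α] {d : ℕ} {f : ℕ → α}
    (h0 : f 0 = 0) (hf : ∀ i < d, f i < f (i + 1)) : ∀ i ≤ d, 0 ≤ f i := by
  intro i hi
  induction i with
  | zero => exact h0.ge
  | succ n ih => exact (ih (by omega)).trans (hf n (by omega)).le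

theorem mul_sum_div_le_four_mul_sq {K : Type*} [Field K] [LinearOrder K] [IsStrictOrderedRing K]
    {d : ℕ} {x y : ℕ → K} (hx0 : x 0 = 0) (hyd : y d = 0)
    (hx : ∀ i < d, 0 < x (i + 1)) (hy : ∀ i < d, 0 < y i)
    (hxmono : ∀ i < d, x i ^ 2 ≤ x (i + 1) ^ 2) :
    (∑ i ∈ range d, y i / x (i + 1) * (x (i + 1) ^ 2 - x i ^ 2)) *
        (∑ i ∈ range d, (y i ^ 2 - y (i + 1) ^ 2) / (y i / x (i + 1))) ≤
      4 * (∑ i ∈ range d, y i * (x (i + 1) - x i)) ^ 2 := by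
  set S := ∑ i ∈ range d, y i * (x (i + 1) - x i) with hS
  have hU₀ : 0 ≤ ∑ i ∈ range d, y i / x (i + 1) * (x (i + 1) ^ 2 - x i ^ 2) := by
    refine sum_nonneg fun i hi => ?_
    have hi := mem_range.1 hi
    exact mul_nonneg (div_nonneg (hy i hi).le (hx i hi).le) (sub_nonneg.2 (hxmono i hi))
  have hU : ∑ i ∈ range d, y i / x (i + 1) * (x (i + 1) ^ 2 - x i ^ 2) ≤ 2 * S := by
    rw [mul_sum]
    refine sum_le_sum fun i hi => ?_
    have hi := mem_range.1 hi
    rw [← mul_assoc]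
    exact div_mul_sq_sub_sq_le_two_mul_sub _ (hy i hi).le (hx i hi)
  have hV : ∑ i ∈ range d, (y i ^ 2 - y (i + 1) ^ 2) / (y i / x (i + 1)) ≤ 2 * S := by
    rw [hS, ← sum_range_mul_sub_succ_eq hyd hx0, mul_sum]
    refine sum_le_sum fun i hi => ?_
    have hi := mem_range.1 hi
    rw [show (y i ^ 2 - y (i + 1) ^ 2) / (y i / x (i + 1)) =
        x (i + 1) / y i * (y i ^ 2 - y (i + 1) ^ 2) by rw [div_div_eq_mul_div]; ring,
      ← mul_assoc]
    exact div_mul_sq_sub_sq_le_two_mul_sub _ (hx i hi).le (hy i hi)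
  calc _ ≤ _ * (2 * S) := mul_le_mul_of_nonneg_left hV hU₀
    _ ≤ (2 * S) * (2 * S) := mul_le_mul_of_nonneg_right hU (hU₀.trans hU)
    _ = 4 * S ^ 2 := by ring

theorem stmt_5_general (d : ℕ) (hd : 1 ≤ d) (t ν : ℕ → ℝ)
    (ht0 : t 0 = 0) (htmono : ∀ i < d, t i < t (i + 1))
    (hνpos : ∀ i < d, 0 < ν i) (hνd : ν d = 0)
    (q : ℕ → ℝ)
    (hq : ∀ i < d, q i = Real.sqrt (t 1 * ν i / (ν 0 * t (i + 1)))) :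
    (∑ i ∈ Finset.range d, q i * (t (i + 1) - t i)) *
      (∑ i ∈ Finset.range d, (ν i - ν (i + 1)) / q i) ≤
    4 * (∑ i ∈ Finset.range d, Real.sqrt (ν i) * (Real.sqrt (t (i + 1)) - Real.sqrt (t i))) ^ 2 := by
  have ht : ∀ i ≤ d, 0 ≤ t i := nonneg_of_zero_of_lt_succ ht0 htmono
  have htpos : ∀ i < d, 0 < t (i + 1) := fun i hi => (ht i hi.le).trans_lt (htmono i hi)
  have hν : ∀ i ≤ d, 0 ≤ ν i := fun i hi =>
    hi.lt_or_eq.elim (fun h => (hνpos i h).le) (fun h => h ▸ hνd.ge)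
  set c := √(t 1) / √(ν 0) with hc_def
  have hc : c ≠ 0 :=
    div_ne_zero (Real.sqrt_pos.2 (htpos 0 hd)).ne' (Real.sqrt_pos.2 (hνpos 0 hd)).ne'
  have hq' : ∀ i ∈ range d, q i = c * (√(ν i) / √(t (i + 1))) := fun i hi => by
    rw [hq i (mem_range.1 hi), Real.sqrt_div (mul_nonneg (ht 1 hd) (hνpos i (mem_range.1 hi)).le),
      Real.sqrt_mul (ht 1 hd), Real.sqrt_mul (hνpos 0 hd).le, hc_def]
    ring
  have hA : ∑ i ∈ range d, q i * (t (i + 1) - t i) =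
      ∑ i ∈ range d, c * (√(ν i) / √(t (i + 1))) * (√(t (i + 1)) ^ 2 - √(t i) ^ 2) :=
    sum_congr rfl fun i hi => by
      rw [hq' i hi, Real.sq_sqrt (ht _ (mem_range.1 hi)), Real.sq_sqrt (ht _ (mem_range.1 hi).le)]
  have hB : ∑ i ∈ range d, (ν i - ν (i + 1)) / q i =
      ∑ i ∈ range d, (√(ν i) ^ 2 - √(ν (i + 1)) ^ 2) / (c * (√(ν i) / √(t (i + 1)))) :=
    sum_congr rfl fun i hi => by
      rw [hq' i hi, Real.sq_sqrt (hν _ (mem_range.1 hi).le), Real.sq_sqrt (hν _ (mem_range.1 hi))]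
  rw [hA, hB, sum_mul_mul_sum_div_const_mul _ hc]
  exact mul_sum_div_le_four_mul_sq (x := fun i => √(t i)) (y := fun i => √(ν i))
    (by simp [ht0]) (by simp [hνd]) (fun i hi => Real.sqrt_pos.2 (htpos i hi))
    (fun i hi => Real.sqrt_pos.2 (hνpos i hi)) fun i hi => by
      simp only [Real.sq_sqrt (ht _ hi.le), Real.sq_sqrt (ht _ hi)]
      exact (htmono i hi).le

theorem stmt_5 (d : ℕ) (hd : 1 ≤ d) (t ν : ℕ → ℝ)
    (ht0 : t 0 = 0) (htmono : ∀ i < d, t i < t (i + 1))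
    (hνpos : ∀ i < d, 0 < ν i) (hνd : ν d = 0)
    (hνdec : ∀ i, i + 1 < d → ν (i + 1) / t (i + 2) ≤ ν i / t (i + 1))
    (q : ℕ → ℝ)
    (hq : ∀ i < d, q i = Real.sqrt (t 1 * ν i / (ν 0 * t (i + 1)))) :
    (∑ i ∈ Finset.range d, q i * (t (i + 1) - t i)) *
      (∑ i ∈ Finset.range d, (ν i - ν (i + 1)) / q i) ≤
    4 * (∑ i ∈ Finset.range d, Real.sqrt (ν i) * (Real.sqrt (t (i + 1)) - Real.sqrt (t i))) ^ 2 :=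
  stmt_5_general d hd t ν ht0 htmono hνpos hνd q hq
end

section
/- Let 0 = t_0 < t_1 < ... < t_d, and let C(0) ≥ C(1) ≥ ... ≥ C(d) = 0 be a decreasing sequence of nonnegative reals. For any q with 1 = q_0 ≥ q_1 ≥ ... ≥ q_{d-1} > 0, (Σ_{i=0}^{d-1} (C(i) - C(i+1))/q_i) · (Σ_{j=0}^{d-1} q_j (t_{j+1} - t_j)) ≥ Σ_{i=0}^{d-1} C(i) (t_{i+1} - t_i). -/
/-!
Summation by parts (using `C d = 0` and `t 0 = 0`) rewrites the left-hand side as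
`∑ (C i - C (i + 1)) * t (i + 1)`, a combination of the `t (i + 1)` with nonnegative weights.
Since `q` is decreasing and `t` increasing, `q i * t (i + 1) = ∑_{j ≤ i} q i * (t (j + 1) - t j)`
is at most `∑_{j ≤ i} q j * (t (j + 1) - t j)`, hence at most the full sum `S`.
So `t (i + 1) ≤ S / q i` for every `i`, and summing against the weights gives the claim.
-/

open Finset

theorem antitoneOn_Iio_of_succ_le {α : Type*} [Preorder α] {f : ℕ → α} {n : ℕ}
    (hf : ∀ i, i + 1 < n → f (i + 1) ≤ f i) : AntitoneOn f (Set.Iio n) := by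
  intro i _ j hj hij
  induction j, hij using Nat.le_induction with
  | base => exact le_rfl
  | succ j _ ih =>
    rw [Set.mem_Iio] at hj
    exact (hf j hj).trans (ih (Set.mem_Iio.2 (by omega)))

theorem sum_range_mul_sub_eq_sum_sub_mul {R : Type*} [CommRing R] (C t : ℕ → R) (n : ℕ) :
    ∑ i ∈ range n, C i * (t (i + 1) - t i) =
      ∑ i ∈ range n, (C i - C (i + 1)) * t (i + 1) + C n * t n - C 0 * t 0 := by
  induction n with
  | zero => simp
  | succ n ih =>
    rw [sum_range_succ, sum_range_succ, ih]
    ring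

theorem mul_sub_le_sum_range_mul_sub {R : Type*} [CommRing R] [PartialOrder R]
    [IsOrderedRing R] {q t : ℕ → R} {n k : ℕ} (hk : k < n) (hq : AntitoneOn q (Set.Iio n))
    (hq_nonneg : ∀ j < n, 0 ≤ q j) (ht : ∀ j < n, t j ≤ t (j + 1)) :
    q k * (t (k + 1) - t 0) ≤ ∑ j ∈ range n, q j * (t (j + 1) - t j) :=
  calc q k * (t (k + 1) - t 0) = ∑ j ∈ range (k + 1), q k * (t (j + 1) - t j) := by
        rw [← mul_sum, sum_range_sub]
    _ ≤ ∑ j ∈ range (k + 1), q j * (t (j + 1) - t j) := by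
        refine sum_le_sum fun j hj => ?_
        have hjk : j ≤ k := Nat.lt_succ_iff.1 (mem_range.1 hj)
        exact mul_le_mul_of_nonneg_right (hq (Set.mem_Iio.2 (by omega)) (Set.mem_Iio.2 hk) hjk)
          (sub_nonneg.2 (ht j (by omega)))
    _ ≤ ∑ j ∈ range n, q j * (t (j + 1) - t j) := by
        refine sum_le_sum_of_subset_of_nonneg (range_subset_range.2 hk) fun j hj _ => ?_
        have hjn := mem_range.1 hj
        exact mul_nonneg (hq_nonneg j hjn) (sub_nonneg.2 (ht j hjn))

theorem stmt_7_general (d : ℕ) (t C q : ℕ → ℝ)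
    (ht0 : t 0 = 0) (htmono : ∀ i < d, t i < t (i + 1))
    (hCdec : ∀ i < d, C (i + 1) ≤ C i) (hCd : C d = 0)
    (hqmono : ∀ i, i + 1 < d → q (i + 1) ≤ q i) (hqpos : 0 < q (d - 1)) :
    ∑ i ∈ Finset.range d, C i * (t (i + 1) - t i) ≤
      (∑ i ∈ Finset.range d, (C i - C (i + 1)) / q i) *
        (∑ j ∈ Finset.range d, q j * (t (j + 1) - t j)) := by
  set S := ∑ j ∈ range d, q j * (t (j + 1) - t j)
  have hq_anti := antitoneOn_Iio_of_succ_le hqmono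
  have hq_pos : ∀ j < d, 0 < q j := fun j hj =>
    hqpos.trans_le (hq_anti (Set.mem_Iio.2 hj) (Set.mem_Iio.2 (by omega)) (by omega))
  rw [sum_range_mul_sub_eq_sum_sub_mul, hCd, ht0, zero_mul, mul_zero, add_zero, sub_zero,
    sum_mul]
  refine sum_le_sum fun k hk => ?_
  have hkd := mem_range.1 hk
  have hqt : q k * t (k + 1) ≤ S := by
    simpa [ht0] using mul_sub_le_sum_range_mul_sub hkd hq_anti (fun j hj => (hq_pos j hj).le)
      (fun j hj => (htmono j hj).le)
  calc (C k - C (k + 1)) * t (k + 1) ≤ (C k - C (k + 1)) * (S / q k) :=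
        mul_le_mul_of_nonneg_left ((le_div_iff₀ (hq_pos k hkd)).2 (by linarith))
          (sub_nonneg.2 (hCdec k hkd))
    _ = (C k - C (k + 1)) / q k * S := by ring

theorem stmt_7 (d : ℕ) (hd : 1 ≤ d) (t C q : ℕ → ℝ)
    (ht0 : t 0 = 0) (htmono : ∀ i < d, t i < t (i + 1))
    (hCnonneg : ∀ i ≤ d, 0 ≤ C i) (hCdec : ∀ i < d, C (i + 1) ≤ C i) (hCd : C d = 0)
    (hq0 : q 0 = 1) (hqmono : ∀ i, i + 1 < d → q (i + 1) ≤ q i) (hqpos : 0 < q (d - 1)) :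
    ∑ i ∈ Finset.range d, C i * (t (i + 1) - t i) ≤
      (∑ i ∈ Finset.range d, (C i - C (i + 1)) / q i) *
        (∑ j ∈ Finset.range d, q j * (t (j + 1) - t j)) :=
  stmt_7_general d t C q ht0 htmono hCdec hCd hqmono hqpos
end

section
/- Let 0 = t_0 < t_1 < ... < t_d with t_1 > 0, and let C(0) ≥ ... ≥ C(d) = 0 be decreasing nonnegative reals. If q_i = t_1/t_{i+1} for 0 ≤ i ≤ d-1, then (Σ_{i=0}^{d-1} q_i (t_{i+1} - t_i)) · (Σ_{i=0}^{d-1} 2(C(i) - C(i+1))/q_i) ≤ 2 (1 + ln(t_d/t_1)) Σ_{i=0}^{d-1} C(i) (t_{i+1} - t_i). -/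
/-!
With `q i = t 1 / t (i + 1)` the first factor is `t 1 * ∑ (t (i+1) - t i) / t (i+1)`. Its first
term is `1` because `t 0 = 0`, and each further term is at most `log (t (i+1) / t i)`, so the sum
telescopes to at most `1 + log (t d / t 1)`. Summation by parts, using `t 0 = 0` and `C d = 0`,
turns the second factor into exactly `(2 / t 1) * ∑ C i * (t (i+1) - t i)`.
-/

open Finset Real

lemma sub_div_le_log_div {a b : ℝ} (ha : 0 < a) (hb : 0 < b) : (b - a) / b ≤ log (b / a) := by
  simpa only [inv_div, one_sub_div hb.ne'] using one_sub_inv_le_log_of_pos (div_pos hb ha)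

lemma sum_range_sub_div_le_log_div (t : ℕ → ℝ) (n : ℕ) (ht : ∀ i ≤ n, 0 < t i) :
    ∑ i ∈ range n, (t (i + 1) - t i) / t (i + 1) ≤ log (t n / t 0) := by
  calc ∑ i ∈ range n, (t (i + 1) - t i) / t (i + 1)
      ≤ ∑ i ∈ range n, (log (t (i + 1)) - log (t i)) := by
        refine sum_le_sum fun i hi => ?_
        have hi := mem_range.mp hi
        rw [← log_div (ht _ hi).ne' (ht _ hi.le).ne']
        exact sub_div_le_log_div (ht _ hi.le) (ht _ hi)
    _ = log (t n / t 0) := by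
        rw [sum_range_sub (fun i => log (t i)), log_div (ht n le_rfl).ne' (ht 0 n.zero_le).ne']

lemma sum_range_succ_sub_div_le_one_add_log (t : ℕ → ℝ) (n : ℕ) (ht0 : t 0 = 0)
    (ht : ∀ i, 0 < i → i ≤ n + 1 → 0 < t i) :
    ∑ i ∈ range (n + 1), (t (i + 1) - t i) / t (i + 1) ≤ 1 + log (t (n + 1) / t 1) := by
  rw [sum_range_succ', ht0, sub_zero, div_self (ht 1 one_pos (by omega)).ne', add_comm]
  gcongr
  exact sum_range_sub_div_le_log_div (fun i => t (i + 1)) n fun i hi => ht _ i.succ_pos (by omega)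

lemma sum_range_sub_mul_succ (C t : ℕ → ℝ) (n : ℕ) :
    ∑ i ∈ range n, (C i - C (i + 1)) * t (i + 1) =
      ∑ i ∈ range n, C i * (t (i + 1) - t i) + (C 0 * t 0 - C n * t n) := by
  rw [← sum_range_sub' (fun i => C i * t i), ← sum_add_distrib]
  exact sum_congr rfl fun i _ => by ring

theorem stmt_8_general (d : ℕ) (hd : 1 ≤ d) (t C q : ℕ → ℝ)
    (ht0 : t 0 = 0) (htmono : ∀ i < d, t i < t (i + 1))
    (hCnonneg : ∀ i ≤ d, 0 ≤ C i) (hCd : C d = 0)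
    (hq : ∀ i < d, q i = t 1 / t (i + 1)) :
    (∑ i ∈ Finset.range d, q i * (t (i + 1) - t i)) *
      (∑ i ∈ Finset.range d, 2 * (C i - C (i + 1)) / q i) ≤
    2 * (1 + Real.log (t d / t 1)) * ∑ i ∈ Finset.range d, C i * (t (i + 1) - t i) := by
  have htpos : ∀ i, 0 < i → i ≤ d → 0 < t i := fun i hi hid =>
    ht0 ▸ strictMonoOn_Iic_of_lt_succ (by simpa using htmono) (Set.mem_Iic.2 d.zero_le) hid hi
  have ht1 : 0 < t 1 := htpos 1 one_pos hd
  set S := ∑ i ∈ range d, C i * (t (i + 1) - t i)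
  have hS : 0 ≤ S := sum_nonneg fun i hi =>
    mul_nonneg (hCnonneg i (mem_range.1 hi).le) (sub_nonneg.2 (htmono i (mem_range.1 hi)).le)
  have hfirst : ∑ i ∈ range d, q i * (t (i + 1) - t i) =
      t 1 * ∑ i ∈ range d, (t (i + 1) - t i) / t (i + 1) := by
    rw [mul_sum]
    refine sum_congr rfl fun i hi => ?_
    rw [hq i (mem_range.1 hi)]
    ring
  have hsecond : ∑ i ∈ range d, 2 * (C i - C (i + 1)) / q i = 2 / t 1 * S := by
    have habel : ∑ i ∈ range d, (C i - C (i + 1)) * t (i + 1) = S := by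
      simpa only [ht0, hCd, mul_zero, zero_mul, sub_zero, add_zero] using
        sum_range_sub_mul_succ C t d
    rw [← habel, mul_sum]
    refine sum_congr rfl fun i hi => ?_
    have hti := htpos (i + 1) i.succ_pos (mem_range.1 hi)
    rw [hq i (mem_range.1 hi)]
    field_simp
  obtain ⟨n, rfl⟩ : ∃ n, d = n + 1 := ⟨d - 1, by omega⟩
  rw [hfirst, hsecond]
  calc _ ≤ t 1 * (1 + log (t (n + 1) / t 1)) * (2 / t 1 * S) := by
        gcongr
        exact sum_range_succ_sub_div_le_one_add_log t n ht0 htpos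
    _ = 2 * (1 + log (t (n + 1) / t 1)) * S := by field_simp

theorem stmt_8 (d : ℕ) (hd : 1 ≤ d) (t C q : ℕ → ℝ)
    (ht0 : t 0 = 0) (ht1 : 0 < t 1) (htmono : ∀ i < d, t i < t (i + 1))
    (hCnonneg : ∀ i ≤ d, 0 ≤ C i) (hCdec : ∀ i < d, C (i + 1) ≤ C i) (hCd : C d = 0)
    (hq : ∀ i < d, q i = t 1 / t (i + 1)) :
    (∑ i ∈ Finset.range d, q i * (t (i + 1) - t i)) *
      (∑ i ∈ Finset.range d, 2 * (C i - C (i + 1)) / q i) ≤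
    2 * (1 + Real.log (t d / t 1)) * ∑ i ∈ Finset.range d, C i * (t (i + 1) - t i) :=
  stmt_8_general d hd t C q ht0 htmono hCnonneg hCd hq
end

section
/- Let 0 = t_0 < t_1 < ... < t_d, let ν ∈ ℝ^{d+1} with ν_0,...,ν_{d-1} > 0 and ν_d = 0, and let ν' be the lower convex hull of the points (t_i, ν_i), i.e., ν' is the largest sequence with ν' ≤ ν such that θ_i := (ν'_{i+1} - ν'_i)/(t_{i+1} - t_i) is increasing in i. Define q*_i = sqrt(θ_i/θ_0) for 0 ≤ i ≤ d-1. Then q* minimizes R(q; t, ν) := (Σ_{i=0}^{d-1} q_i(t_{i+1}-t_i))(Σ_{i=0}^{d-1} (ν_i - ν_{i+1})/q_i) over all q with 1 = q_0 ≥ q_1 ≥ ... ≥ q_{d-1} > 0, and R(q*; t, ν) = (Σ_{i=0}^{d-1} sqrt((ν'_i - ν'_{i+1})(t_{i+1} - t_i)))^2. -/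
open Finset Real

lemma abel_id (g c : ℕ → ℝ) : ∀ d : ℕ,
    ∑ i ∈ Finset.range d, (g i - g (i+1)) * c i =
      g 0 * c 0 - g d * c d + ∑ i ∈ Finset.range d, g (i+1) * (c (i+1) - c i) := by
  intro d
  induction d with
  | zero => simp
  | succ n ih => rw [Finset.sum_range_succ, Finset.sum_range_succ, ih]; ring



/-- the geometric optimal-distribution theorem.  `ν'` is the lower
convex hull of the points `(t i, ν i)`, i.e. the largest sequence below `ν` whose
difference quotients `θ i = (ν' (i+1) - ν' i)/(t (i+1) - t i)` are increasing,
and `q* i = √(θ i / θ 0)` minimizes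
`R q = (∑ q i (t (i+1) - t i)) * (∑ (ν i - ν (i+1))/q i)` over
`A = {q : 1 = q 0 ≥ q 1 ≥ ⋯ ≥ q (d-1) > 0}`. -/
theorem stmt_10 (d : ℕ) (hd : 1 ≤ d) (t ν ν' : ℕ → ℝ)
    (ht0 : t 0 = 0) (htmono : ∀ i < d, t i < t (i + 1))
    (hνpos : ∀ i < d, 0 < ν i) (hνd : ν d = 0)
    -- ν' is the lower hull of ν:
    (hle : ∀ i ≤ d, ν' i ≤ ν i)
    (hconv : ∀ i, i + 1 < d →
      (ν' (i + 1) - ν' i) / (t (i + 1) - t i) ≤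
        (ν' (i + 2) - ν' (i + 1)) / (t (i + 2) - t (i + 1)))
    (hsup : ∀ μ : ℕ → ℝ, (∀ i ≤ d, μ i ≤ ν i) →
      (∀ i, i + 1 < d →
        (μ (i + 1) - μ i) / (t (i + 1) - t i) ≤
          (μ (i + 2) - μ (i + 1)) / (t (i + 2) - t (i + 1))) →
      ∀ i ≤ d, μ i ≤ ν' i)
    (θ qstar : ℕ → ℝ)
    (hθ : ∀ i < d, θ i = (ν' (i + 1) - ν' i) / (t (i + 1) - t i))
    (hqstar : ∀ i < d, qstar i = Real.sqrt (θ i / θ 0)) :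
    -- q* belongs to A
    (qstar 0 = 1 ∧ (∀ i, i + 1 < d → qstar (i + 1) ≤ qstar i) ∧ 0 < qstar (d - 1)) ∧
    -- q* minimizes R over A
    (∀ q : ℕ → ℝ, q 0 = 1 → (∀ i, i + 1 < d → q (i + 1) ≤ q i) → 0 < q (d - 1) →
      (∑ i ∈ Finset.range d, qstar i * (t (i + 1) - t i)) *
          (∑ i ∈ Finset.range d, (ν i - ν (i + 1)) / qstar i) ≤
        (∑ i ∈ Finset.range d, q i * (t (i + 1) - t i)) *
          (∑ i ∈ Finset.range d, (ν i - ν (i + 1)) / q i)) ∧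
    -- the value of the minimum
    (∑ i ∈ Finset.range d, qstar i * (t (i + 1) - t i)) *
        (∑ i ∈ Finset.range d, (ν i - ν (i + 1)) / qstar i) =
      (∑ i ∈ Finset.range d, Real.sqrt ((ν' i - ν' (i + 1)) * (t (i + 1) - t i))) ^ 2 := by
  -- basic facts about t
  have htnn : ∀ i, i ≤ d → 0 ≤ t i := by
    intro i hi
    induction i with
    | zero => simp [ht0]
    | succ n ih =>
      have h1 := htmono n (by omega)
      have h2 := ih (by omega)
      linarith
  have hapos : ∀ i, i < d → 0 < t (i+1) - t i := fun i hi => by linarith [htmono i hi]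
  have htmono' : ∀ j, j ≤ d → ∀ i, i ≤ j → t i ≤ t j := by
    intro j
    induction j with
    | zero =>
      intro _ i hi
      have h : i = 0 := by omega
      rw [h]
    | succ n ih =>
      intro hj i hi
      rcases Nat.eq_or_lt_of_le hi with h | h
      · rw [h]
      · exact le_trans (ih (by omega) i (by omega)) (le_of_lt (htmono n (by omega)))
  have htipos : ∀ i, 1 ≤ i → i ≤ d → 0 < t i := by
    intro i h1 h2
    have h3 := htmono 0 (by omega)
    have h4 := htmono' i h2 1 h1
    rw [ht0] at h3
    linarith
  have htdpos : 0 < t d := htipos d hd le_rfl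
  have hνnn : ∀ i, i ≤ d → 0 ≤ ν i := by
    intro i hi
    rcases Nat.eq_or_lt_of_le hi with h | h
    · subst h; rw [hνd]
    · exact le_of_lt (hνpos i h)
  -- ν' d = 0
  have h0le : ∀ i ≤ d, (0:ℝ) ≤ ν' i := by
    have := hsup (fun _ => 0) (fun i hi => hνnn i hi) (by intro i hi; norm_num)
    simpa using this
  have hν'd : ν' d = 0 :=
    le_antisymm (by simpa [hνd] using hle d le_rfl) (h0le d le_rfl)
  -- ν' 0 = ν 0
  have hν'0 : ν' 0 = ν 0 := by
    refine le_antisymm (hle 0 (by omega)) ?_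
    obtain ⟨M, hM⟩ : ∃ M : ℝ, ∀ i, 1 ≤ i → i ≤ d → M ≤ (ν i - ν 0) / t i :=
      ⟨(Finset.Icc 1 d).inf' ⟨1, by simp [hd]⟩ (fun i => (ν i - ν 0)/t i),
        fun i h1 h2 => Finset.inf'_le _ (Finset.mem_Icc.mpr ⟨h1, h2⟩)⟩
    have hlin : ∀ k, k < d →
        (ν 0 + M * t (k+1) - (ν 0 + M * t k)) / (t (k+1) - t k) = M := by
      intro k hk
      rw [show ν 0 + M * t (k+1) - (ν 0 + M * t k) = M * (t (k+1) - t k) by ring,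
        mul_div_assoc, div_self (hapos k hk).ne', mul_one]
    have key := hsup (fun i => ν 0 + M * t i) ?_ ?_ 0 (by omega)
    · simpa [ht0] using key
    · intro i hi
      rcases Nat.eq_zero_or_pos i with h | h
      · subst h; simp [ht0]
      · have h1 := hM i h hi
        have h2 := htipos i h hi
        have h3 : M * t i ≤ ν i - ν 0 := (le_div_iff₀ h2).mp h1
        linarith
    · intro i hi
      rw [hlin i (by omega), hlin (i+1) hi]
  -- θ is increasing
  have hθconv : ∀ i, i + 1 < d → θ i ≤ θ (i+1) := by
    intro i hi
    rw [hθ i (by omega), hθ (i+1) hi]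
    exact hconv i hi
  have hθmono : ∀ j, j < d → ∀ i, i ≤ j → θ i ≤ θ j := by
    intro j
    induction j with
    | zero =>
      intro _ i hi
      have h : i = 0 := by omega
      rw [h]
    | succ n ih =>
      intro hj i hi
      rcases Nat.eq_or_lt_of_le hi with h | h
      · rw [h]
      · exact le_trans (ih (by omega) i (by omega)) (hθconv n hj)
  have hd1 : d - 1 + 1 = d := by omega
  -- ν' (d-1) > 0
  have hν'dm1 : 0 < ν' (d - 1) := by
    obtain ⟨m, hmpos, hmle⟩ : ∃ m : ℝ, 0 < m ∧ ∀ i, i < d → m ≤ ν i := by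
      refine ⟨(Finset.range d).inf' ⟨0, Finset.mem_range.mpr hd⟩ ν, ?_, ?_⟩
      · obtain ⟨i, hi, hieq⟩ := Finset.exists_mem_eq_inf' ⟨0, Finset.mem_range.mpr hd⟩ ν
        rw [hieq]; exact hνpos i (Finset.mem_range.mp hi)
      · exact fun i hi => Finset.inf'_le _ (Finset.mem_range.mpr hi)
    have key := hsup (fun i => (m / t d) * (t d - t i)) ?_ ?_ (d-1) (by omega)
    · have h2 : 0 < t d - t (d-1) := by
        have := hapos (d-1) (by omega); rwa [hd1] at this
      have h3 : 0 < (m / t d) * (t d - t (d-1)) := by positivity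
      have key' : (m / t d) * (t d - t (d-1)) ≤ ν' (d-1) := key
      linarith
    · intro i hi
      rcases Nat.eq_or_lt_of_le hi with h | h
      · subst h; simp [hνd]
      · have h1 := htnn i (by omega)
        have h2 : (m / t d) * (t d - t i) ≤ (m / t d) * t d := by
          apply mul_le_mul_of_nonneg_left (by linarith) (by positivity)
        rw [div_mul_cancel₀ m htdpos.ne'] at h2
        linarith [hmle i h]
    · intro i hi
      have hlin : ∀ k, k < d →
          ((m / t d) * (t d - t (k+1)) - (m / t d) * (t d - t k)) / (t (k+1) - t k)
            = -(m / t d) := by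
        intro k hk
        rw [show (m / t d) * (t d - t (k+1)) - (m / t d) * (t d - t k)
            = -(m / t d) * (t (k+1) - t k) by ring,
          mul_div_assoc, div_self (hapos k hk).ne', mul_one]
      rw [hlin i (by omega), hlin (i+1) hi]
  -- θ negative
  have hθd1 : θ (d-1) < 0 := by
    have h := hθ (d-1) (by omega)
    rw [hd1] at h
    rw [h, hν'd]
    have h2 : 0 < t d - t (d-1) := by
      have := hapos (d-1) (by omega); rwa [hd1] at this
    exact div_neg_of_neg_of_pos (by linarith) h2
  have hθneg : ∀ i, i < d → θ i < 0 := fun i hi =>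
    lt_of_le_of_lt (hθmono (d-1) (by omega) i (by omega)) hθd1
  have hθ0neg : θ 0 < 0 := hθneg 0 (by omega)
  -- qstar facts
  have hqspos : ∀ i, i < d → 0 < qstar i := by
    intro i hi
    rw [hqstar i hi]
    exact Real.sqrt_pos.mpr (div_pos_iff.mpr (Or.inr ⟨hθneg i hi, hθ0neg⟩))
  have hq0 : qstar 0 = 1 := by
    rw [hqstar 0 (by omega), div_self hθ0neg.ne, Real.sqrt_one]
  have hqsmono : ∀ i, i + 1 < d → qstar (i + 1) ≤ qstar i := by
    intro i hi
    rw [hqstar i (by omega), hqstar (i+1) hi]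
    apply Real.sqrt_le_sqrt
    rw [div_eq_mul_inv, div_eq_mul_inv]
    exact mul_le_mul_of_nonpos_right (hθconv i hi) (inv_nonpos.mpr hθ0neg.le)
  -- flatness where ν' < ν (the bump argument)
  have hflat : ∀ i, i + 1 < d → ν' (i+1) < ν (i+1) → θ i = θ (i+1) := by
    intro i hi hgap
    by_contra hne
    have hlt : θ i < θ (i+1) := lt_of_le_of_ne (hθconv i hi) hne
    have ha1 : 0 < t (i+1) - t i := hapos i (by omega)
    have ha2 : 0 < t (i+2) - t (i+1) := hapos (i+1) hi
    obtain ⟨ε, hεpos, hε1, hεbound⟩ : ∃ ε : ℝ, 0 < ε ∧ ε ≤ ν (i+1) - ν' (i+1) ∧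
        ε * ((t (i+1) - t i)⁻¹ + (t (i+2) - t (i+1))⁻¹) ≤ θ (i+1) - θ i := by
      have hden : 0 < (t (i+1) - t i)⁻¹ + (t (i+2) - t (i+1))⁻¹ := by positivity
      refine ⟨min (ν (i+1) - ν' (i+1))
        ((θ (i+1) - θ i) / ((t (i+1) - t i)⁻¹ + (t (i+2) - t (i+1))⁻¹)),
        lt_min (by linarith) (div_pos (by linarith) hden), min_le_left _ _, ?_⟩
      calc min (ν (i+1) - ν' (i+1))
            ((θ (i+1) - θ i) / ((t (i+1) - t i)⁻¹ + (t (i+2) - t (i+1))⁻¹))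
            * ((t (i+1) - t i)⁻¹ + (t (i+2) - t (i+1))⁻¹)
          ≤ ((θ (i+1) - θ i) / ((t (i+1) - t i)⁻¹ + (t (i+2) - t (i+1))⁻¹))
              * ((t (i+1) - t i)⁻¹ + (t (i+2) - t (i+1))⁻¹) :=
            mul_le_mul_of_nonneg_right (min_le_right _ _) hden.le
        _ = θ (i+1) - θ i := div_mul_cancel₀ _ hden.ne'
    have hq' : ∀ j, j < d → (ν' (j+1) - ν' j) / (t (j+1) - t j) = θ j :=
      fun j hj => (hθ j hj).symm
    have key := hsup (fun k => if k = i + 1 then ν' (i+1) + ε else ν' k) ?_ ?_ (i+1) (by omega)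
    · have key' : ν' (i+1) + ε ≤ ν' (i+1) := by simpa using key
      linarith
    · intro k hk
      show (if k = i + 1 then ν' (i+1) + ε else ν' k) ≤ ν k
      by_cases h : k = i + 1
      · rw [if_pos h, h]
        linarith
      · rw [if_neg h]
        exact hle k hk
    · intro k hk
      show ((if k + 1 = i + 1 then ν' (i+1) + ε else ν' (k+1))
            - (if k = i + 1 then ν' (i+1) + ε else ν' k)) / (t (k+1) - t k)
          ≤ ((if k + 2 = i + 1 then ν' (i+1) + ε else ν' (k+2))
            - (if k + 1 = i + 1 then ν' (i+1) + ε else ν' (k+1))) / (t (k+2) - t (k+1))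
      by_cases hk1 : k = i
      · rw [if_pos (show k + 1 = i + 1 by omega), if_neg (show ¬ k = i + 1 by omega),
          if_neg (show ¬ k + 2 = i + 1 by omega),
          show (i:ℕ) + 1 = k + 1 by omega]
        have hb := hεbound
        rw [← hk1] at hb hlt
        have e1 : (ν' (k+1) + ε - ν' k) / (t (k+1) - t k)
            = θ k + ε * (t (k+1) - t k)⁻¹ := by
          rw [show ν' (k+1) + ε - ν' k = (ν' (k+1) - ν' k) + ε by ring, add_div,
            hq' k (by omega), div_eq_mul_inv]
        have e2 : (ν' (k+2) - (ν' (k+1) + ε)) / (t (k+2) - t (k+1))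
            = θ (k+1) - ε * (t (k+2) - t (k+1))⁻¹ := by
          rw [show ν' (k+2) - (ν' (k+1) + ε) = (ν' (k+2) - ν' (k+1)) - ε by ring, sub_div,
            hq' (k+1) (by omega), div_eq_mul_inv]
        rw [e1, e2]
        have e3 : ε * (t (k+1) - t k)⁻¹ + ε * (t (k+2) - t (k+1))⁻¹
            = ε * ((t (k+1) - t k)⁻¹ + (t (k+2) - t (k+1))⁻¹) := by ring
        nlinarith [hb, e3]
      · by_cases hk2 : k = i + 1
        · rw [if_pos hk2, if_neg (show ¬ k + 1 = i + 1 by omega),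
            if_neg (show ¬ k + 2 = i + 1 by omega),
            show (i:ℕ) + 1 = k from hk2.symm]
          have e2 : (ν' (k+1) - (ν' k + ε)) / (t (k+1) - t k)
              = θ k - ε * (t (k+1) - t k)⁻¹ := by
            rw [show ν' (k+1) - (ν' k + ε) = (ν' (k+1) - ν' k) - ε by ring, sub_div,
              hq' k (by omega), div_eq_mul_inv]
          rw [e2, hq' (k+1) (by omega)]
          have h1 : 0 < ε * (t (k+1) - t k)⁻¹ := by
            have := hapos k (by omega)
            positivity
          have h2 : θ k ≤ θ (k+1) := hθconv k hk
          linarith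
        · by_cases hk3 : k + 2 = i + 1
          · rw [if_pos hk3, if_neg (show ¬ k = i + 1 by omega),
              if_neg (show ¬ k + 1 = i + 1 by omega),
              show (i:ℕ) + 1 = k + 2 from hk3.symm, hq' k (by omega)]
            have e3 : (ν' (k+2) + ε - ν' (k+1)) / (t (k+2) - t (k+1))
                = θ (k+1) + ε * (t (k+2) - t (k+1))⁻¹ := by
              rw [show ν' (k+2) + ε - ν' (k+1) = (ν' (k+2) - ν' (k+1)) + ε by ring, add_div,
                hq' (k+1) (by omega), div_eq_mul_inv]
            rw [e3]
            have h1 : 0 ≤ ε * (t (k+2) - t (k+1))⁻¹ := by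
              have := hapos (k+1) (by omega)
              positivity
            have h2 : θ k ≤ θ (k+1) := hθconv k hk
            linarith
          · rw [if_neg (show ¬ k = i + 1 by omega),
              if_neg (show ¬ k + 1 = i + 1 by omega),
              if_neg (show ¬ k + 2 = i + 1 by omega),
              hq' k (by omega), hq' (k+1) (by omega)]
            exact hθconv k hk
  -- positivity chain for any admissible q
  have hchain : ∀ q : ℕ → ℝ, (∀ i, i + 1 < d → q (i + 1) ≤ q i) →
      ∀ j, j ≤ d - 1 → ∀ i, i ≤ j → q j ≤ q i := by
    intro q hqm j
    induction j with
    | zero =>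
      intro _ i hi
      have h : i = 0 := by omega
      rw [h]
    | succ n ih =>
      intro hj i hi
      rcases Nat.eq_or_lt_of_le hi with h | h
      · rw [h]
      · exact le_trans (hqm n (by omega)) (ih (by omega) i (by omega))
  -- the Abel summation identity
  have habel : ∀ p : ℕ → ℝ,
      ∑ i ∈ Finset.range d, (ν i - ν (i+1)) / p i
        - ∑ i ∈ Finset.range d, (ν' i - ν' (i+1)) / p i
      = ∑ i ∈ Finset.range d, (ν (i+1) - ν' (i+1)) * ((p (i+1))⁻¹ - (p i)⁻¹) := by
    intro p
    have h2 : ∑ i ∈ Finset.range d, ((ν i - ν' i) - (ν (i+1) - ν' (i+1))) * (p i)⁻¹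
        = (ν 0 - ν' 0) * (p 0)⁻¹ - (ν d - ν' d) * (p d)⁻¹
          + ∑ i ∈ Finset.range d, (ν (i+1) - ν' (i+1)) * ((p (i+1))⁻¹ - (p i)⁻¹) :=
      abel_id (fun i => ν i - ν' i) (fun i => (p i)⁻¹) d
    rw [← Finset.sum_sub_distrib]
    have h1 : ∀ i ∈ Finset.range d,
        (ν i - ν (i+1)) / p i - (ν' i - ν' (i+1)) / p i
          = ((ν i - ν' i) - (ν (i+1) - ν' (i+1))) * (p i)⁻¹ := by
      intro i hi
      rw [div_sub_div_same, div_eq_mul_inv]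
      congr 1
      ring
    rw [Finset.sum_congr rfl h1, h2, hν'0, hνd, hν'd]
    ring
  -- S and related sums
  set S : ℝ := ∑ i ∈ Finset.range d, Real.sqrt (-θ i) * (t (i+1) - t i) with hSdef
  have hb' : ∀ i, i < d → ν' i - ν' (i+1) = (-θ i) * (t (i+1) - t i) := by
    intro i hi
    have h2 : ν' (i+1) - ν' i = θ i * (t (i+1) - t i) := by
      rw [hθ i hi, div_mul_cancel₀ _ (hapos i hi).ne']
    linarith
  have hRHS : ∑ i ∈ Finset.range d, Real.sqrt ((ν' i - ν' (i+1)) * (t (i+1) - t i)) = S := by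
    apply Finset.sum_congr rfl
    intro i hi
    have hi' := Finset.mem_range.mp hi
    rw [hb' i hi']
    rw [show (-θ i) * (t (i+1) - t i) * (t (i+1) - t i) = (-θ i) * (t (i+1) - t i)^2 by ring,
      Real.sqrt_mul (by linarith [hθneg i hi']) , Real.sqrt_sq (hapos i hi').le]
  have hSpos : 0 < S := by
    apply Finset.sum_pos
    · intro i hi
      have hi' := Finset.mem_range.mp hi
      have := hθneg i hi'
      have := hapos i hi'
      have : 0 < Real.sqrt (-θ i) := Real.sqrt_pos.mpr (by linarith [hθneg i hi'])
      positivity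
    · exact ⟨0, Finset.mem_range.mpr hd⟩
  set s0 : ℝ := Real.sqrt (-θ 0) with hs0def
  have hs0pos : 0 < s0 := Real.sqrt_pos.mpr (by linarith)
  have hqstar' : ∀ i, i < d → qstar i = Real.sqrt (-θ i) / s0 := by
    intro i hi
    rw [hqstar i hi, show θ i / θ 0 = (-θ i) / (-θ 0) by rw [neg_div_neg_eq],
      Real.sqrt_div (by linarith [hθneg i hi]), hs0def]
  have hSA : ∑ i ∈ Finset.range d, qstar i * (t (i+1) - t i) = S / s0 := by
    rw [hSdef, Finset.sum_div]
    apply Finset.sum_congr rfl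
    intro i hi
    rw [hqstar' i (Finset.mem_range.mp hi), div_mul_eq_mul_div]
  have hSB : ∑ i ∈ Finset.range d, (ν' i - ν' (i+1)) / qstar i = S * s0 := by
    rw [hSdef, Finset.sum_mul]
    apply Finset.sum_congr rfl
    intro i hi
    have hi' := Finset.mem_range.mp hi
    have hθi : (0:ℝ) ≤ -θ i := by linarith [hθneg i hi']
    have hsi : 0 < Real.sqrt (-θ i) := Real.sqrt_pos.mpr (by linarith [hθneg i hi'])
    rw [hb' i hi', hqstar' i hi', div_div_eq_mul_div, div_eq_iff hsi.ne']
    linear_combination (t i - t (i+1)) * s0 * Real.mul_self_sqrt hθi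
  -- at qstar the ν-sum equals the ν'-sum
  have heqq : ∑ i ∈ Finset.range d, (ν i - ν (i+1)) / qstar i
      = ∑ i ∈ Finset.range d, (ν' i - ν' (i+1)) / qstar i := by
    have h := habel qstar
    have hzero : ∑ i ∈ Finset.range d,
        (ν (i+1) - ν' (i+1)) * ((qstar (i+1))⁻¹ - (qstar i)⁻¹) = 0 := by
      apply Finset.sum_eq_zero
      intro i hi
      have hi' := Finset.mem_range.mp hi
      by_cases h' : i + 1 < d
      case neg =>
        rw [show i + 1 = d by omega, hνd, hν'd]
        simp
      case pos =>
        by_cases hg : ν (i+1) - ν' (i+1) = 0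
        · rw [hg, zero_mul]
        · have hgap : ν' (i+1) < ν (i+1) :=
            lt_of_le_of_ne (hle (i+1) (by omega)) (fun hh => hg (by rw [hh]; ring))
          have hθeq := hflat i h' hgap
          have hqeq : qstar (i+1) = qstar i := by
            rw [hqstar (i+1) h', hqstar i (by omega), hθeq]
          rw [hqeq, sub_self, mul_zero]
    rw [hzero] at h
    linarith
  have hmain : (∑ i ∈ Finset.range d, qstar i * (t (i+1) - t i)) *
      (∑ i ∈ Finset.range d, (ν i - ν (i+1)) / qstar i) = S ^ 2 := by
    rw [heqq, hSA, hSB]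
    field_simp
  refine ⟨⟨hq0, hqsmono, hqspos (d-1) (by omega)⟩, ?_, ?_⟩
  · intro q hq0' hqm' hqd'
    have hqpos : ∀ i, i < d → 0 < q i := fun i hi =>
      lt_of_lt_of_le hqd' (hchain q hqm' (d-1) le_rfl i (by omega))
    have hstepA : ∑ i ∈ Finset.range d, (ν' i - ν' (i+1)) / q i
        ≤ ∑ i ∈ Finset.range d, (ν i - ν (i+1)) / q i := by
      have h := habel q
      have hnn : 0 ≤ ∑ i ∈ Finset.range d,
          (ν (i+1) - ν' (i+1)) * ((q (i+1))⁻¹ - (q i)⁻¹) := by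
        apply Finset.sum_nonneg
        intro i hi
        have hi' := Finset.mem_range.mp hi
        by_cases h' : i + 1 < d
        case neg =>
          rw [show i + 1 = d by omega, hνd, hν'd]
          simp
        case pos =>
          apply mul_nonneg
          · have := hle (i+1) (by omega)
            linarith
          · have h1 := hqpos (i+1) h'
            have h3 := hqm' i h'
            have h4 : (q i)⁻¹ ≤ (q (i+1))⁻¹ := by
              apply one_div_le_one_div_of_le h1 h3 |>.trans_eq (one_div _) |>.trans_eq' ?_
              exact one_div _
            linarith
      linarith
    have hcs : S ^ 2 ≤ (∑ i ∈ Finset.range d, q i * (t (i+1) - t i)) *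
        (∑ i ∈ Finset.range d, (ν' i - ν' (i+1)) / q i) := by
      rw [← hRHS]
      apply Finset.sum_sq_le_sum_mul_sum_of_sq_eq_mul
      · intro i hi
        have hi' := Finset.mem_range.mp hi
        exact mul_nonneg (hqpos i hi').le (hapos i hi').le
      · intro i hi
        have hi' := Finset.mem_range.mp hi
        apply div_nonneg _ (hqpos i hi').le
        rw [hb' i hi']
        have h5 := hθneg i hi'
        have h6 := hapos i hi'
        exact le_of_lt (mul_pos (neg_pos.mpr h5) h6)
      · intro i hi
        have hi' := Finset.mem_range.mp hi
        have hqne := (hqpos i hi').ne'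
        rw [Real.sq_sqrt]
        · field_simp
        · rw [hb' i hi']
          have h5 := hθneg i hi'
          have h6 := hapos i hi'
          exact le_of_lt (mul_pos (mul_pos (neg_pos.mpr h5) h6) h6)
    have hqa : 0 ≤ ∑ i ∈ Finset.range d, q i * (t (i+1) - t i) := by
      apply Finset.sum_nonneg
      intro i hi
      have hi' := Finset.mem_range.mp hi
      exact mul_nonneg (hqpos i hi').le (hapos i hi').le
    rw [hmain]
    exact le_trans hcs (mul_le_mul_of_nonneg_left hstepA hqa)
  · rw [hmain, hRHS]
end

section
/- Let (X_m), 0 ≤ m ≤ d, be a Markov chain defined by X_{i+1} = g_i(X_i, Y_i) where Y_0,...,Y_{d-1} are independent random variables independent of X_0, and g_i are measurable. Let g be measurable with g(X_d) square-integrable. Setting U_i = Y_{d-i} so that g(X_d) = f(U_1,...,U_d), for 0 ≤ i ≤ d one has C(i) := Var(E[g(X_d) | U_{i+1},...,U_d]) = Var(E[g(X_d) | X_{d-i}]). -/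
/-!
Write `k = d - i`. Unrolling the recursion, `X d = Φ (X k, W)` for a measurable `Φ`, where
`W = (Y k, …, Y (d-1))` collects the inputs after time `k`; `X k` is measurable with respect to
`σ(Y j : j < k)`, which is independent of `W`. By the freezing lemma, conditioning `g (X d)` on either
`σ(Y j : j < k)` or the smaller `σ(X k)` yields the same function `x ↦ E[g (Φ (x, W))]` evaluated
at `X k`, so the two conditional expectations agree almost everywhere and have the same variance.
-/

open MeasureTheory ProbabilityTheory

namespace ProbabilityTheory

variable {Ω α β : Type*} {m mΩ : MeasurableSpace Ω} [MeasurableSpace α] [MeasurableSpace β]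
  {μ : Measure Ω}

lemma iIndepFun.indep_iSup_comap_pi {ι κ : Type*} {Y : ι → Ω → β}
    (hY : iIndepFun Y μ) (hmeas : ∀ i, Measurable (Y i)) {p : ι → Prop} {e : κ → ι}
    (he : ∀ c, ¬ p (e c)) :
    Indep (⨆ i : {i // p i}, MeasurableSpace.comap (Y i) ‹_›)
      (MeasurableSpace.comap (fun ω c => Y (e c) ω) MeasurableSpace.pi) μ := by
  refine indep_of_indep_of_le (indep_iSup_of_disjoint (fun i => (hmeas i).comap_le) hY
    (disjoint_compl_right (a := {i | p i}))) ?_ ?_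
  · exact iSup_le fun i =>
      le_iSup₂ (f := fun i (_ : i ∈ {i | p i}) => MeasurableSpace.comap (Y i) ‹_›) i.1 i.2
  · rw [MeasurableSpace.comap_process_pi]
    exact iSup_le fun c =>
      le_iSup₂ (f := fun i (_ : i ∈ {i | p i}ᶜ) => MeasurableSpace.comap (Y i) ‹_›) (e c) (he c)

variable [IsFiniteMeasure μ] {ξ : Ω → α} {W : Ω → β} {H : α × β → ℝ}

lemma IndepFun.integrable_prod_map_map (hξ : Measurable ξ) (hW : Measurable W)
    (hind : IndepFun ξ W μ) (hH : Measurable H)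
    (hint : Integrable (fun ω => H (ξ ω, W ω)) μ) :
    Integrable H ((μ.map ξ).prod (μ.map W)) := by
  rw [← (indepFun_iff_map_prod_eq_prod_map_map hξ.aemeasurable hW.aemeasurable).mp hind]
  exact (integrable_map_measure hH.aestronglyMeasurable (hξ.prodMk hW).aemeasurable).mpr hint

lemma IndepFun.integrable_integral_comp (hξ : Measurable ξ) (hW : Measurable W)
    (hind : IndepFun ξ W μ) (hH : Measurable H)
    (hint : Integrable (fun ω => H (ξ ω, W ω)) μ) :
    Integrable (fun ω => ∫ w, H (ξ ω, w) ∂(μ.map W)) μ :=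
  (integrable_map_measure hH.stronglyMeasurable.integral_prod_right'.aestronglyMeasurable
    hξ.aemeasurable).mp (hind.integrable_prod_map_map hξ hW hH hint).integral_prod_left

lemma IndepFun.integral_comp_eq_integral_integral (hξ : Measurable ξ) (hW : Measurable W)
    (hind : IndepFun ξ W μ) (hH : Measurable H)
    (hint : Integrable (fun ω => H (ξ ω, W ω)) μ) :
    ∫ ω, H (ξ ω, W ω) ∂μ = ∫ ω, ∫ w, H (ξ ω, w) ∂(μ.map W) ∂μ := by
  rw [← integral_map (hξ.prodMk hW).aemeasurable hH.aestronglyMeasurable,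
    (indepFun_iff_map_prod_eq_prod_map_map hξ.aemeasurable hW.aemeasurable).mp hind,
    integral_prod H (hind.integrable_prod_map_map hξ hW hH hint),
    integral_map hξ.aemeasurable hH.stronglyMeasurable.integral_prod_right'.aestronglyMeasurable]

/-- The freezing lemma. -/
lemma condExp_comp_prod_ae_eq_integral (hm : m ≤ mΩ) {Z : Ω → α}
    (hZ : Measurable[m] Z) (hW : Measurable W) (hind : Indep m (MeasurableSpace.comap W ‹_›) μ)
    (hH : Measurable H) (hint : Integrable (fun ω => H (Z ω, W ω)) μ) :
    μ[fun ω => H (Z ω, W ω) | m] =ᵐ[μ] fun ω => ∫ w, H (Z ω, w) ∂(μ.map W) := by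
  have hZW : IndepFun Z W μ := indep_of_indep_of_le_left hind hZ.comap_le
  refine (ae_eq_condExp_of_forall_setIntegral_eq hm hint (fun s _ _ =>
    (hZW.integrable_integral_comp (hZ.mono hm le_rfl) hW hH hint).integrableOn)
    (fun s hs _ => ?_)
    (hH.stronglyMeasurable.integral_prod_right'.comp_measurable hZ).aestronglyMeasurable).symm
  -- pair `Z` with the indicator of `s`: both are `m`-measurable, hence jointly independent of `W`
  set ζ : Ω → ℝ × α := fun ω => (s.indicator (fun _ => 1) ω, Z ω)
  have hζ : Measurable[m] ζ := (measurable_const.indicator hs).prodMk hZ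
  have hG : Measurable fun p : (ℝ × α) × β => p.1.1 * H (p.1.2, p.2) :=
    measurable_fst.fst.mul (hH.comp (measurable_fst.snd.prodMk measurable_snd))
  have hζW : IndepFun ζ W μ := indep_of_indep_of_le_left hind hζ.comap_le
  have key := hζW.integral_comp_eq_integral_integral (hζ.mono hm le_rfl) hW hG
  classical
  simp only [ζ, integral_const_mul] at key
  simp only [Set.indicator_apply, ite_mul, one_mul, zero_mul] at key
  rw [← integral_indicator (hm s hs), ← integral_indicator (hm s hs)]
  simp only [Set.indicator_apply]
  exact (key (hint.indicator (hm s hs))).symm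

lemma condExp_comp_prod_ae_eq_condExp_comap (hm : m ≤ mΩ) {Z : Ω → α}
    (hZ : Measurable[m] Z) (hW : Measurable W) (hind : Indep m (MeasurableSpace.comap W ‹_›) μ)
    (hH : Measurable H) (hint : Integrable (fun ω => H (Z ω, W ω)) μ) :
    μ[fun ω => H (Z ω, W ω) | m] =ᵐ[μ] μ[fun ω => H (Z ω, W ω) | MeasurableSpace.comap Z ‹_›] :=
  (condExp_comp_prod_ae_eq_integral hm hZ hW hind hH hint).trans
    (condExp_comp_prod_ae_eq_integral (hZ.comap_le.trans hm) (comap_measurable Z) hW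
      (indep_of_indep_of_le_left hind hZ.comap_le) hH hint).symm

end ProbabilityTheory

section MarkovChain

variable {Ω F F' : Type*} [MeasurableSpace F] [MeasurableSpace F']

def flow (step : ℕ → F' → F → F') : (n : ℕ) → (Fin n → F) → F' → F'
  | 0, _, x => x
  | n + 1, y, x => step n (flow step n (fun j => y j.castSucc) x) (y (Fin.last n))

lemma measurable_flow {step : ℕ → F' → F → F'}
    (hstep : ∀ i, Measurable (fun p : F' × F => step i p.1 p.2)) (n : ℕ) :
    Measurable (fun p : F' × (Fin n → F) => flow step n p.2 p.1) := by
  induction n with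
  | zero => exact measurable_fst
  | succ n ih =>
    exact (hstep n).comp ((ih.comp (measurable_fst.prodMk
      (measurable_pi_lambda _ fun j => (measurable_pi_apply _).comp measurable_snd))).prodMk
      ((measurable_pi_apply _).comp measurable_snd))

variable {d : ℕ} {Y : Fin d → Ω → F} {step : ℕ → F' → F → F'} {X : ℕ → Ω → F'}

lemma measurable_chain {m : MeasurableSpace Ω}
    (hstep : ∀ i, Measurable (fun p : F' × F => step i p.1 p.2)) (hX0 : Measurable[m] (X 0))
    (hXrec : ∀ i : Fin d, X ((i : ℕ) + 1) = fun ω => step i (X i ω) (Y i ω))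
    {k : ℕ} (hkd : k ≤ d) (hY : ∀ j : Fin d, (j : ℕ) < k → Measurable[m] (Y j)) :
    ∀ n ≤ k, Measurable[m] (X n) := by
  intro n
  induction n with
  | zero => exact fun _ => hX0
  | succ n ih =>
    intro hn
    rw [hXrec ⟨n, by omega⟩]
    exact (hstep n).comp ((ih (by omega)).prodMk (hY ⟨n, by omega⟩ hn))

omit [MeasurableSpace F] [MeasurableSpace F'] in
lemma chain_eq_flow (hXrec : ∀ i : Fin d, X ((i : ℕ) + 1) = fun ω => step i (X i ω) (Y i ω))
    {k n : ℕ} (hkn : k + n ≤ d) (ω : Ω) :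
    X (k + n) ω =
      flow (fun j => step (k + j)) n (fun j => Y ⟨k + j, by omega⟩ ω) (X k ω) := by
  induction n with
  | zero => rfl
  | succ n ih =>
    rw [← add_assoc, hXrec ⟨k + n, by omega⟩]
    dsimp only
    rw [ih (by omega)]
    rfl

lemma condExp_chain_ae_eq_condExp_comap {mΩ : MeasurableSpace Ω} {μ : Measure Ω}
    [IsFiniteMeasure μ] (hYmeas : ∀ j, Measurable (Y j)) (hYindep : iIndepFun Y μ)
    (hstep : ∀ i, Measurable (fun p : F' × F => step i p.1 p.2)) {x0 : F'}
    (hX0 : X 0 = fun _ => x0)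
    (hXrec : ∀ i : Fin d, X ((i : ℕ) + 1) = fun ω => step i (X i ω) (Y i ω))
    {g : F' → ℝ} (hg : Measurable g) (hint : Integrable (fun ω => g (X d ω)) μ)
    {k : ℕ} (hkd : k ≤ d) :
    μ[fun ω => g (X d ω) | ⨆ j : {j : Fin d // (j : ℕ) < k}, MeasurableSpace.comap (Y j) ‹_›]
      =ᵐ[μ] μ[fun ω => g (X d ω) | MeasurableSpace.comap (X k) ‹_›] := by
  have hXk : Measurable[⨆ j : {j : Fin d // (j : ℕ) < k}, MeasurableSpace.comap (Y j) ‹_›]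
      (X k) :=
    measurable_chain hstep (hX0 ▸ measurable_const) hXrec hkd
      (fun j hj => measurable_iff_comap_le.mpr (le_iSup_of_le (ι := {j : Fin d // (j : ℕ) < k})
        ⟨j, hj⟩ le_rfl)) _ le_rfl
  set W : Ω → Fin (d - k) → F := fun ω j => Y ⟨k + j, by omega⟩ ω
  have hXd : (fun ω => g (X d ω)) =
      fun ω => g (flow (fun j => step (k + j)) (d - k) (W ω) (X k ω)) := by
    ext ω
    rw [← chain_eq_flow hXrec (by omega), Nat.add_sub_cancel' hkd]
  rw [hXd] at hint ⊢
  refine condExp_comp_prod_ae_eq_condExp_comap ?_ hXk (measurable_pi_lambda _ fun j => hYmeas _)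
    (hYindep.indep_iSup_comap_pi hYmeas fun j => by simp)
    (hg.comp (measurable_flow (fun j => hstep _) _)) hint
  exact iSup_le fun j => (hYmeas _).comap_le

end MarkovChain

/-- for a Markov chain `X_{i+1} = g_i (X_i, Y_i)` driven by
independent random variables `Y_0, …, Y_{d-1}`, setting `U_k = Y_{d-k}` one has
`C i = Var(E[g(X_d) | U_{i+1}, …, U_d]) = Var(E[g(X_d) | X_{d-i}])`.
Since `{U_{i+1}, …, U_d} = {Y_j : j < d - i}`, the first σ-algebra is the one
generated by the `Y j` with `(j : ℕ) < d - i`. -/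
theorem stmt_13 {Ω F F' : Type*} [MeasurableSpace Ω]
    [mF : MeasurableSpace F] [mF' : MeasurableSpace F']
    (μ : Measure Ω) [IsProbabilityMeasure μ]
    (d : ℕ) (x0 : F') (Y : Fin d → Ω → F)
    (hYmeas : ∀ j, Measurable (Y j))
    (hYindep : iIndepFun Y μ)
    (step : ℕ → F' → F → F')
    (hstep : ∀ i, Measurable (fun p : F' × F => step i p.1 p.2))
    (X : ℕ → Ω → F')
    (hX0 : X 0 = fun _ => x0)
    (hXrec : ∀ i : Fin d, X ((i : ℕ) + 1) = fun ω => step i (X i ω) (Y i ω))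
    (g : F' → ℝ) (hg : Measurable g)
    (hgL2 : MemLp (fun ω => g (X d ω)) 2 μ) :
    ∀ i ≤ d,
      variance
        (μ[(fun ω => g (X d ω)) |
          ⨆ j : {j : Fin d // (j : ℕ) < d - i}, MeasurableSpace.comap (Y j) mF]) μ =
      variance
        (μ[(fun ω => g (X d ω)) | MeasurableSpace.comap (X (d - i)) mF']) μ := by
  intro i _
  exact variance_congr (condExp_chain_ae_eq_condExp_comap hYmeas hYindep hstep hX0 hXrec hg
    (hgL2.integrable one_le_two) (Nat.sub_le d i))
end

section
/- Let 0 = t_0 < t_1 < ... < t_d with t_i ≤ c·i, let 0 = m_0 < m_1 < ... < m_L = d be integers, and let (ν_i), 0 ≤ i ≤ d, be a decreasing sequence of nonnegative reals with ν_d = 0 such that ν_{m_l} ≤ Var(φ_L - φ_l) for each l. Then Σ_{i=0}^{d-1} sqrt(ν_i/(i+1)) ≤ 2 Σ_{l=1}^{L} sqrt(m_l · V_l), where V_l = Var(φ_l - φ_{l-1}) and φ_0 = 0, and the φ_l are square-integrable random variables with φ_L given. -/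
/-!
Cut `range d` into the blocks `[m l, m (l + 1))`. On a block `ν i ≤ ν (m l)`, and
`1 / √(i + 1) ≤ 2 (√(i + 1) - √i)` telescopes, so the block contributes at most
`2 (√m_{l+1} - √m_l) √ν(m l)`. Next
`√ν(m l) ≤ sd(φ_L - φ_l) ≤ ∑_{k ≥ l} sd(φ_{k+1} - φ_k)`, the standard deviation
being subadditive (Minkowski in `L²` after centring). Summation by parts turns
the total coefficient of `sd(φ_{k+1} - φ_k)` into `2 √m_{k+1}`.
-/

open MeasureTheory ProbabilityTheory Finset

lemma sqrt_variance_eq_toReal_eLpNorm {Ω : Type*} [MeasurableSpace Ω] (X : Ω → ℝ)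
    (μ : Measure Ω) : √(variance X μ) = (eLpNorm (fun ω => X ω - μ[X]) 2 μ).toReal := by
  have hevar : evariance X μ = eLpNorm (fun ω => X ω - μ[X]) 2 μ ^ 2 := by
    rw [eLpNorm_eq_lintegral_rpow_enorm_toReal two_ne_zero ENNReal.ofNat_ne_top, evariance,
      ← ENNReal.rpow_natCast _ 2, ← ENNReal.rpow_mul]
    norm_num
  rw [variance, hevar, ENNReal.toReal_pow, Real.sqrt_sq ENNReal.toReal_nonneg]

lemma sqrt_variance_add_le {Ω : Type*} [MeasurableSpace Ω] {μ : Measure Ω} [IsFiniteMeasure μ]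
    {X Y : Ω → ℝ} (hX : MemLp X 2 μ) (hY : MemLp Y 2 μ) :
    √(variance (fun ω => X ω + Y ω) μ) ≤ √(variance X μ) + √(variance Y μ) := by
  have hXc : MemLp (fun ω => X ω - μ[X]) 2 μ := hX.sub (memLp_const _)
  have hYc : MemLp (fun ω => Y ω - μ[Y]) 2 μ := hY.sub (memLp_const _)
  have hcentre : (fun ω => X ω + Y ω - μ[fun ω => X ω + Y ω]) =
      (fun ω => X ω - μ[X]) + fun ω => Y ω - μ[Y] := by
    ext ω
    simp only [integral_add (hX.integrable one_le_two) (hY.integrable one_le_two), Pi.add_apply]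
    ring
  simp only [sqrt_variance_eq_toReal_eLpNorm, hcentre]
  rw [← ENNReal.toReal_add hXc.eLpNorm_ne_top hYc.eLpNorm_ne_top]
  exact ENNReal.toReal_mono (by finiteness)
    (eLpNorm_add_le hXc.aestronglyMeasurable hYc.aestronglyMeasurable one_le_two)

lemma sqrt_variance_sub_le_sum {Ω : Type*} [MeasurableSpace Ω] {μ : Measure Ω}
    [IsFiniteMeasure μ] {f : ℕ → Ω → ℝ} {a b : ℕ} (hab : a ≤ b)
    (hf : ∀ k ∈ Icc a b, MemLp (f k) 2 μ) :
    √(variance (fun ω => f b ω - f a ω) μ) ≤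
      ∑ k ∈ Ico a b, √(variance (fun ω => f (k + 1) ω - f k ω) μ) := by
  induction b, hab using Nat.le_induction with
  | base => simp [← Pi.zero_def, variance_zero]
  | succ b hab ih =>
    have hmem : ∀ k ∈ Icc a b, MemLp (f k) 2 μ := fun k hk =>
      hf k (Icc_subset_Icc_right b.le_succ hk)
    have hb : MemLp (f b) 2 μ := hmem b (right_mem_Icc.2 hab)
    have hsplit := sqrt_variance_add_le (X := fun ω => f (b + 1) ω - f b ω)
      (Y := fun ω => f b ω - f a ω) ((hf (b + 1) (right_mem_Icc.2 (by omega))).sub hb)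
      (hb.sub (hmem a (left_mem_Icc.2 hab)))
    simp only [sub_add_sub_cancel] at hsplit
    rw [sum_Ico_succ_top hab]
    linarith [ih hmem]

lemma one_div_sqrt_succ_le (x : ℝ) (hx : 0 ≤ x) :
    1 / √(x + 1) ≤ 2 * (√(x + 1) - √x) := by
  have hpos : 0 < √(x + 1) := Real.sqrt_pos.2 (by linarith)
  rw [div_le_iff₀ hpos]
  nlinarith [Real.mul_self_sqrt hx, Real.mul_self_sqrt (by linarith : 0 ≤ x + 1),
    sq_nonneg (√(x + 1) - √x), Real.sqrt_nonneg x]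

lemma sum_Ico_sqrt_div_succ_le (ν : ℕ → ℝ) {a b : ℕ} (hab : a ≤ b)
    (hν : ∀ i ∈ Ico a b, ν i ≤ ν a) :
    ∑ i ∈ Ico a b, √(ν i / (i + 1)) ≤ 2 * (√b - √a) * √(ν a) := by
  calc ∑ i ∈ Ico a b, √(ν i / (i + 1))
      ≤ ∑ i ∈ Ico a b, 2 * (√((i + 1 : ℕ) : ℝ) - √i) * √(ν a) := by
        refine sum_le_sum fun i hi => ?_
        have hsqrt_le : √(i : ℝ) ≤ √(i + 1) := Real.sqrt_le_sqrt (by linarith)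
        rw [Real.sqrt_div' _ (by positivity), div_eq_mul_one_div, mul_comm, Nat.cast_succ]
        exact mul_le_mul (one_div_sqrt_succ_le i i.cast_nonneg) (Real.sqrt_le_sqrt (hν i hi))
          (Real.sqrt_nonneg _) (by linarith)
    _ = 2 * (√b - √a) * √(ν a) := by
        rw [← sum_mul, ← mul_sum, sum_Ico_sub (fun i : ℕ => √(i : ℝ)) hab]

lemma sum_range_sum_Ico_eq_sub {M : Type*} [AddCommGroup M] (f : ℕ → M) {m : ℕ → ℕ}
    {n : ℕ}
    (hm : ∀ l < n, m l ≤ m (l + 1)) :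
    ∑ l ∈ range n, ∑ i ∈ Ico (m l) (m (l + 1)), f i =
      ∑ i ∈ range (m n), f i - ∑ i ∈ range (m 0), f i := by
  rw [← sum_range_sub (fun l => ∑ i ∈ range (m l), f i)]
  exact sum_congr rfl fun l hl => sum_Ico_eq_sub f (hm l (mem_range.1 hl))

lemma sum_range_sub_mul_sum_Ico {R : Type*} [Ring R] (g s : ℕ → R) (n : ℕ) :
    ∑ l ∈ range n, (g (l + 1) - g l) * ∑ k ∈ Ico l n, s k =
      ∑ k ∈ range n, (g (k + 1) - g 0) * s k := by
  simp_rw [mul_sum]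
  rw [sum_comm' (t' := range n) (s' := fun k => range (k + 1)) (by intro l k; simp; omega)]
  simp_rw [← sum_mul, sum_range_sub]

theorem stmt_17_general {Ω : Type*} [MeasurableSpace Ω] (μ : Measure Ω) [IsProbabilityMeasure μ]
    (d L : ℕ) (m : ℕ → ℕ)
    (hm0 : m 0 = 0) (hmmono : ∀ l < L, m l < m (l + 1)) (hmL : m L = d)
    (φ : ℕ → Ω → ℝ) (hφL2 : ∀ l ≤ L, MemLp (φ l) 2 μ)
    (ν : ℕ → ℝ) (hνdec : ∀ i < d, ν (i + 1) ≤ ν i)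
    (hν : ∀ l ≤ L, ν (m l) ≤ variance (fun ω => φ L ω - φ l ω) μ) :
    ∑ i ∈ Finset.range d, Real.sqrt (ν i / (i + 1)) ≤
      2 * ∑ l ∈ Finset.Icc 1 L,
        Real.sqrt ((m l : ℝ) * variance (fun ω => φ l ω - φ (l - 1) ω) μ) := by
  set σ : ℕ → ℝ := fun k => √(variance (fun ω => φ (k + 1) ω - φ k ω) μ)
  have hm_mono : MonotoneOn m (Set.Iic L) := monotoneOn_of_le_add_one Set.ordConnected_Iic
    fun l _ _ hl => (hmmono l (Nat.lt_of_succ_le hl)).le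
  have hν_anti : AntitoneOn ν (Set.Iic d) := antitoneOn_of_add_one_le Set.ordConnected_Iic
    fun i _ _ hi => hνdec i (Nat.lt_of_succ_le hi)
  have hblock : ∀ l < L, ∀ i ∈ Ico (m l) (m (l + 1)), ν i ≤ ν (m l) := fun l hl i hi => by
    have : m (l + 1) ≤ d := hmL ▸ hm_mono (Set.mem_Iic.2 hl) (Set.mem_Iic.2 le_rfl) hl
    obtain ⟨hli, hir⟩ := mem_Ico.1 hi
    exact hν_anti (by simp; omega) (by simp; omega) hli
  have htail : ∀ l < L, √(ν (m l)) ≤ ∑ k ∈ Ico l L, σ k := fun l hl =>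
    (Real.sqrt_le_sqrt (hν l hl.le)).trans
      (sqrt_variance_sub_le_sum hl.le fun k hk => hφL2 k (mem_Icc.1 hk).2)
  calc ∑ i ∈ range d, √(ν i / (i + 1))
      = ∑ l ∈ range L, ∑ i ∈ Ico (m l) (m (l + 1)), √(ν i / (i + 1)) := by
        rw [sum_range_sum_Ico_eq_sub _ fun l hl => (hmmono l hl).le, hm0, hmL]
        simp
    _ ≤ ∑ l ∈ range L, 2 * (√(m (l + 1) : ℝ) - √(m l : ℝ)) * √(ν (m l)) :=
        sum_le_sum fun l hl =>
          sum_Ico_sqrt_div_succ_le ν (hmmono l (mem_range.1 hl)).le (hblock l (mem_range.1 hl))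
    _ ≤ ∑ l ∈ range L,
          2 * (√(m (l + 1) : ℝ) - √(m l : ℝ)) * ∑ k ∈ Ico l L, σ k := by
        gcongr with l hl
        · have hml : (m l : ℝ) ≤ m (l + 1) := by exact_mod_cast (hmmono l (mem_range.1 hl)).le
          exact mul_nonneg zero_le_two (sub_nonneg.2 (Real.sqrt_le_sqrt hml))
        · exact htail l (mem_range.1 hl)
    _ = 2 * ∑ k ∈ range L, √(m (k + 1) : ℝ) * σ k := by
        simp_rw [mul_assoc, ← mul_sum, sum_range_sub_mul_sum_Ico (fun l => √(m l : ℝ)), hm0]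
        simp
    _ = _ := by
        rw [← Finset.Ico_add_one_right_eq_Icc, sum_Ico_eq_sum_range]
        simp [σ, Real.sqrt_mul, add_comm]

/-- the MLMC comparison lemma. -/
theorem stmt_17 {Ω : Type*} [MeasurableSpace Ω] (μ : Measure Ω) [IsProbabilityMeasure μ]
    (d L : ℕ) (hL : 1 ≤ L) (c : ℝ) (t : ℕ → ℝ) (m : ℕ → ℕ)
    (ht0 : t 0 = 0) (htmono : ∀ i < d, t i < t (i + 1)) (htc : ∀ i ≤ d, t i ≤ c * i)
    (hm0 : m 0 = 0) (hmmono : ∀ l < L, m l < m (l + 1)) (hmL : m L = d)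
    (φ : ℕ → Ω → ℝ) (hφ0 : φ 0 = fun _ => 0) (hφL2 : ∀ l ≤ L, MemLp (φ l) 2 μ)
    (ν : ℕ → ℝ) (hνnonneg : ∀ i ≤ d, 0 ≤ ν i) (hνdec : ∀ i < d, ν (i + 1) ≤ ν i)
    (hνd : ν d = 0)
    (hν : ∀ l ≤ L, ν (m l) ≤ variance (fun ω => φ L ω - φ l ω) μ) :
    ∑ i ∈ Finset.range d, Real.sqrt (ν i / (i + 1)) ≤
      2 * ∑ l ∈ Finset.Icc 1 L,
        Real.sqrt ((m l : ℝ) * variance (fun ω => φ l ω - φ (l - 1) ω) μ) :=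
  stmt_17_general μ d L m hm0 hmmono hmL φ hφL2 ν hνdec hν
end
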